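/- Let (b, B, m, μ) be an admissible parameter set. For u ∈ K let DR(u) denote the map sending v ∈ H to the unique element DR(u)v ∈ H with ⟨DR(u)v, x⟩ = ⟨B*(v),x⟩ + ∫ (⟨ξ,v⟩ e^{−⟨ξ,u⟩} − ⟨χ(ξ),v⟩) ‖ξ‖^{−2} ν_x(dξ) for all x ∈ K, and let D²R(u)(v,w) denote the unique element of H with ⟨D²R(u)(v,w), x⟩ = −∫ ⟨ξ,v⟩ ⟨ξ,w⟩ e^{−⟨ξ,u⟩} ‖ξ‖^{−2} ν_x(dξ) for all x ∈ K. Then: (a) DR(u) is a bounded linear operator on H which is quasi-monotone with respect to K; (b) for all u₀ ∈ K and v ∈ H, ‖DR(u₀)v‖ ≤ ‖B*‖_{L(H)}‖v‖ + ‖μ(K∖{0})‖ (1 + ‖u₀‖) ‖v‖; (c) for all u₀, u₁ ∈ K and v ∈ H, ‖DR(u₀)v − DR(u₁)v‖ ≤ ‖μ(K∖{0})‖ ‖u₀ − u₁‖ ‖v‖; (d) for all u₀ ∈ K and v, w ∈ H, ‖D²R(u₀)(v,w)‖ ≤ ‖μ(K∖{0})‖ ‖v‖ ‖w‖; and (e)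 for fixed v, w ∈ H the map u ↦ D²R(u)(v,w) is continuous on K. -/

import Mathlib

open MeasureTheory Filter
open scoped RealInnerProductSpace Topology ENNReal

noncomputable section

def IsSelfDualCone {H : Type*} [NormedAddCommGroup H] [InnerProductSpace ℝ H]
    (K : Set H) : Prop :=
  K = {x : H | ∀ y ∈ K, 0 ≤ ⟪x, y⟫}

def trunc {H : Type*} [NormedAddCommGroup H] [InnerProductSpace ℝ H] (ξ : H) : H :=
  if ‖ξ‖ ≤ 1 then ξ else 0

structure AdmissibleParams (H : Type*) [NormedAddCommGroup H] [InnerProductSpace ℝ H]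
    [CompleteSpace H] [MeasurableSpace H] [BorelSpace H] (K : Set H) where
  b : H
  B : H →L[ℝ] H
  m : Measure H
  ν : H → Measure H
  muVec : Set H → H
  m_support : m ((K \ {0})ᶜ) = 0
  m_sq : IntegrableOn (fun ξ : H => ‖ξ‖ ^ 2) (K \ {0}) m
  m_chi : ∀ h : H, IntegrableOn (fun ξ : H => |⟪trunc ξ, h⟫|) (K \ {0}) m
  m_Im : ∃ Im : H, ∀ h : H, ⟪Im, h⟫ = ∫ ξ in K \ {0}, ⟪trunc ξ, h⟫ ∂m
  b_drift : ∀ v ∈ K, 0 ≤ ⟪b, v⟫ - ∫ ξ in K \ {0}, ⟪trunc ξ, v⟫ ∂m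
  ν_finite : ∀ x ∈ K, IsFiniteMeasure (ν x)
  ν_support : ∀ x ∈ K, ν x ((K \ {0})ᶜ) = 0
  ν_add : ∀ x ∈ K, ∀ y ∈ K, ν (x + y) = ν x + ν y
  ν_smul : ∀ x ∈ K, ∀ c : ℝ, 0 ≤ c → ν (c • x) = ENNReal.ofReal c • ν x
  ν_int : ∀ u ∈ K, ∀ x ∈ K, ⟪u, x⟫ = 0 →
    IntegrableOn (fun ξ : H => ⟪trunc ξ, u⟫ / ‖ξ‖ ^ 2) (K \ {0}) (ν x)
  B_quasi : ∀ u ∈ K, ∀ x ∈ K, ⟪u, x⟫ = 0 →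
    0 ≤ ⟪ContinuousLinearMap.adjoint B u, x⟫
      - ∫ ξ in K \ {0}, ⟪trunc ξ, u⟫ / ‖ξ‖ ^ 2 ∂(ν x)
  muVec_mem : ∀ S : Set H, MeasurableSet S → muVec S ∈ K
  muVec_spec : ∀ S : Set H, MeasurableSet S → ∀ x ∈ K, ⟪muVec S, x⟫ = (ν x S).toReal

/-!
Every estimate is first proved against test vectors `x ∈ K`: the integrands are bounded
pointwise on `K \ {0}` (using `⟪ξ, u⟫ ≥ 0`, `|e^{-a} - e^{-b}| ≤ min 1 |a - b|` for `a, b ≥ 0`,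
and the truncation `χ` near `ξ = 0`), so the pairing with `x` is at most
`C ν_x(K \ {0}) = C ⟪μ(K \ {0}), x⟫`. In a self-dual cone, `|⟪z, x⟫| ≤ ⟪a, x⟫` for all `x ∈ K`
forces `‖z‖ ≤ ‖a‖`: write `z = p - q` with `p, q ∈ K` orthogonal (Moreau), so that
`‖z‖² ≤ ⟪a, p + q⟫` and `‖p + q‖ = ‖z‖`. For the continuity of `D²R`, jumps with `‖ξ‖ ≤ R`
give a term Lipschitz in `u`, and the tail is controlled by
`‖μ(K \ {0} ∩ {‖ξ‖ > R})‖² ≤ ν_{μ(K \ {0})}({‖ξ‖ > R}) → 0`.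
-/

lemma Real.abs_exp_neg_sub_exp_neg_le {a b : ℝ} (ha : 0 ≤ a) (hb : 0 ≤ b) :
    |Real.exp (-a) - Real.exp (-b)| ≤ |a - b| := by
  wlog hab : b ≤ a generalizing a b
  · rw [abs_sub_comm, abs_sub_comm a]; exact this hb ha (le_of_not_ge hab)
  have hfactor : Real.exp (-b) - Real.exp (-a) = Real.exp (-b) * (1 - Real.exp (-(a - b))) := by
    rw [mul_sub, mul_one, ← Real.exp_add]; ring_nf
  have hexp_le : Real.exp (-b) ≤ 1 := Real.exp_le_one_iff.2 (neg_nonpos.2 hb)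
  have hgap_le : 1 - Real.exp (-(a - b)) ≤ a - b := by linarith [Real.one_sub_le_exp_neg (a - b)]
  have hgap_nonneg : 0 ≤ 1 - Real.exp (-(a - b)) :=
    sub_nonneg.2 (Real.exp_le_one_iff.2 (neg_nonpos.2 (sub_nonneg.2 hab)))
  rw [abs_sub_comm, abs_of_nonneg (sub_nonneg.2 hab), hfactor,
    abs_of_nonneg (mul_nonneg (Real.exp_pos _).le hgap_nonneg)]
  simpa using mul_le_mul hexp_le hgap_le hgap_nonneg zero_le_one

lemma Real.abs_exp_neg_sub_exp_neg_le_one {a b : ℝ} (ha : 0 ≤ a) (hb : 0 ≤ b) :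
    |Real.exp (-a) - Real.exp (-b)| ≤ 1 := by
  have ha' := Real.exp_le_one_iff.2 (neg_nonpos.2 ha)
  have hb' := Real.exp_le_one_iff.2 (neg_nonpos.2 hb)
  rw [abs_sub_le_iff]
  constructor <;> linarith [Real.exp_pos (-a), Real.exp_pos (-b)]

lemma abs_inner_mul_div_norm_sq_le {H : Type*} [NormedAddCommGroup H] [InnerProductSpace ℝ H]
    {ξ : H} (v : H) {c C : ℝ} (hC : 0 ≤ C) (hc : |c| ≤ C * ‖ξ‖) :
    |⟪ξ, v⟫ * c / ‖ξ‖ ^ 2| ≤ ‖v‖ * C := by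
  rcases eq_or_ne ξ 0 with rfl | hξ
  · simpa using mul_nonneg (norm_nonneg v) hC
  rw [abs_div, abs_mul, abs_of_nonneg (sq_nonneg ‖ξ‖), div_le_iff₀ (by positivity)]
  calc |⟪ξ, v⟫| * |c| ≤ (‖ξ‖ * ‖v‖) * (C * ‖ξ‖) :=
        mul_le_mul (abs_real_inner_le_norm ξ v) hc (abs_nonneg _) (by positivity)
    _ = ‖v‖ * C * ‖ξ‖ ^ 2 := by ring

theorem norm_setIntegral_le_of_norm_le_of_norm_le {α E : Type*} [MeasurableSpace α]
    [NormedAddCommGroup E] [NormedSpace ℝ E] {μ : Measure α} [IsFiniteMeasure μ]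
    {s t : Set α} (ht : MeasurableSet t) {f : α → E} (hf : IntegrableOn f s μ) {a b : ℝ}
    (ha : 0 ≤ a) (hfa : ∀ x ∈ s \ t, ‖f x‖ ≤ a) (hfb : ∀ x ∈ s ∩ t, ‖f x‖ ≤ b) :
    ‖∫ x in s, f x ∂μ‖ ≤ a * μ.real s + b * μ.real (s ∩ t) := by
  rw [← integral_inter_add_sdiff ht hf]
  refine (norm_add_le _ _).trans ?_
  rw [add_comm]
  gcongr
  · exact (norm_setIntegral_le_of_norm_le_const (measure_lt_top _ _) hfa).trans
      (mul_le_mul_of_nonneg_left (measureReal_mono Set.sdiff_subset) ha)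
  · exact norm_setIntegral_le_of_norm_le_const (measure_lt_top _ _) hfb

lemma continuousWithinAt_of_dist_le_mul_add {α β : Type*} [PseudoMetricSpace α]
    [PseudoMetricSpace β] {f : α → β} {s : Set α} {a : α} {C ε : ℕ → ℝ}
    (hε : Tendsto ε atTop (𝓝 0))
    (h : ∀ n, ∀ x ∈ s, dist (f x) (f a) ≤ C n * dist x a + ε n) :
    ContinuousWithinAt f s a := by
  rw [ContinuousWithinAt, tendsto_iff_dist_tendsto_zero]
  refine tendsto_order.2 ⟨fun e he => Eventually.of_forall fun x => he.trans_le dist_nonneg,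
    fun e he => ?_⟩
  obtain ⟨n, hn⟩ := (hε.eventually (gt_mem_nhds he)).exists
  have hlim : Tendsto (fun x => C n * dist x a + ε n) (𝓝[s] a) (𝓝 (C n * dist a a + ε n)) :=
    ((tendsto_nhdsWithin_of_tendsto_nhds (tendsto_id.dist tendsto_const_nhds)).const_mul
      _).add_const _
  filter_upwards [hlim.eventually (gt_mem_nhds (by simpa using hn)), self_mem_nhdsWithin]
    with x hx hxs
  exact (h n x hxs).trans_lt hx

namespace IsSelfDualCone

variable {H : Type*} [NormedAddCommGroup H] [InnerProductSpace ℝ H] {K : Set H}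

lemma mem_iff (hK : IsSelfDualCone K) {x : H} : x ∈ K ↔ ∀ y ∈ K, 0 ≤ ⟪x, y⟫ :=
  Set.ext_iff.1 hK x

lemma inner_nonneg (hK : IsSelfDualCone K) {x y : H} (hx : x ∈ K) (hy : y ∈ K) :
    0 ≤ ⟪x, y⟫ :=
  hK.mem_iff.1 hx y hy

lemma add_mem (hK : IsSelfDualCone K) {x y : H} (hx : x ∈ K) (hy : y ∈ K) : x + y ∈ K :=
  hK.mem_iff.2 fun z hz => by
    rw [inner_add_left]; exact add_nonneg (hK.inner_nonneg hx hz) (hK.inner_nonneg hy hz)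

lemma smul_mem (hK : IsSelfDualCone K) {c : ℝ} (hc : 0 ≤ c) {x : H} (hx : x ∈ K) :
    c • x ∈ K :=
  hK.mem_iff.2 fun z hz => by
    rw [real_inner_smul_left]; exact mul_nonneg hc (hK.inner_nonneg hx hz)

lemma zero_mem (hK : IsSelfDualCone K) : (0 : H) ∈ K :=
  hK.mem_iff.2 fun _ _ => by rw [inner_zero_left]

lemma convex (hK : IsSelfDualCone K) : Convex ℝ K :=
  fun _ hx _ hy _ _ ha hb _ => hK.add_mem (hK.smul_mem ha hx) (hK.smul_mem hb hy)

lemma isClosed (hK : IsSelfDualCone K) : IsClosed K := by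
  have hK' : K = ⋂ y ∈ K, {x | 0 ≤ ⟪x, y⟫} := by
    ext x; simpa only [Set.mem_iInter, Set.mem_ofPred_eq] using hK.mem_iff
  rw [hK']
  exact isClosed_biInter fun y _ =>
    isClosed_le continuous_const (continuous_id.inner continuous_const)

lemma eq_of_forall_inner_eq (hK : IsSelfDualCone K) {z₁ z₂ : H}
    (h : ∀ x ∈ K, ⟪z₁, x⟫ = ⟪z₂, x⟫) : z₁ = z₂ := by
  have h0 : ∀ x ∈ K, ⟪z₁ - z₂, x⟫ = 0 := fun x hx => by rw [inner_sub_left, h x hx, sub_self]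
  have hmem : z₁ - z₂ ∈ K := hK.mem_iff.2 fun x hx => (h0 x hx).ge
  exact sub_eq_zero.1 (inner_self_eq_zero.1 (h0 _ hmem))

/-- Moreau decomposition: `p` is the metric projection of `z` onto `K`. -/
lemma exists_eq_sub_inner_eq_zero [CompleteSpace H] (hK : IsSelfDualCone K) (z : H) :
    ∃ p ∈ K, ∃ q ∈ K, z = p - q ∧ ⟪p, q⟫ = 0 := by
  obtain ⟨p, hp, hmin⟩ := exists_norm_eq_iInf_of_complete_convex ⟨0, hK.zero_mem⟩
    hK.isClosed.isComplete hK.convex z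
  have hvar : ∀ w ∈ K, ⟪z - p, w - p⟫ ≤ 0 :=
    (norm_eq_iInf_iff_real_inner_le_zero hK.convex hp).1 hmin
  have hq : p - z ∈ K := hK.mem_iff.2 fun y hy => by
    have := hvar (p + y) (hK.add_mem hp hy)
    rw [add_sub_cancel_left] at this
    rw [← neg_sub, inner_neg_left]; linarith
  have h₁ : ⟪z - p, p⟫ ≤ 0 := by
    simpa [two_smul] using hvar ((2 : ℝ) • p) (hK.smul_mem zero_le_two hp)
  have h₂ : 0 ≤ ⟪z - p, p⟫ := by
    simpa using hvar 0 hK.zero_mem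
  refine ⟨p, hp, p - z, hq, (sub_sub_cancel p z).symm, ?_⟩
  rw [← neg_sub, inner_neg_right, real_inner_comm]
  linarith

lemma norm_le_of_abs_inner_le [CompleteSpace H] (hK : IsSelfDualCone K) {z a : H}
    (h : ∀ x ∈ K, |⟪z, x⟫| ≤ ⟪a, x⟫) : ‖z‖ ≤ ‖a‖ := by
  obtain ⟨p, hp, q, hq, rfl, hpq⟩ := hK.exists_eq_sub_inner_eq_zero z
  have hnorm : ‖p + q‖ = ‖p - q‖ := by
    rw [← sq_eq_sq₀ (norm_nonneg _) (norm_nonneg _), norm_add_sq_real, norm_sub_sq_real, hpq]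
    ring
  have hsq : ‖p - q‖ ^ 2 ≤ ‖a‖ * ‖p - q‖ :=
    calc ‖p - q‖ ^ 2 = ⟪p - q, p⟫ - ⟪p - q, q⟫ := by
          rw [← real_inner_self_eq_norm_sq, inner_sub_right]
      _ ≤ ⟪a, p⟫ + ⟪a, q⟫ := by
          linarith [(le_abs_self _).trans (h p hp), (neg_le_abs _).trans (h q hq)]
      _ = ⟪a, p + q⟫ := (inner_add_right a p q).symm
      _ ≤ ‖a‖ * ‖p - q‖ := hnorm ▸ real_inner_le_norm a (p + q)
  nlinarith [norm_nonneg (p - q), norm_nonneg a]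

lemma measurableSet_diff_zero [MeasurableSpace H] [OpensMeasurableSpace H]
    (hK : IsSelfDualCone K) : MeasurableSet (K \ {0}) :=
  hK.isClosed.measurableSet.diff (measurableSet_singleton 0)

end IsSelfDualCone

section Integrands

variable {H : Type*} [NormedAddCommGroup H] [InnerProductSpace ℝ H]

def drIntegrand (u v ξ : H) : ℝ :=
  (⟪ξ, v⟫ * Real.exp (-⟪ξ, u⟫) - ⟪trunc ξ, v⟫) / ‖ξ‖ ^ 2

def d2rIntegrand (u v w ξ : H) : ℝ :=
  ⟪ξ, v⟫ * ⟪ξ, w⟫ * Real.exp (-⟪ξ, u⟫) / ‖ξ‖ ^ 2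

@[fun_prop]
lemma measurable_trunc [MeasurableSpace H] [OpensMeasurableSpace H] :
    Measurable (trunc : H → H) :=
  Measurable.ite (measurableSet_le measurable_norm measurable_const) measurable_id
    measurable_const

lemma measurable_drIntegrand [MeasurableSpace H] [BorelSpace H] (u v : H) :
    Measurable (drIntegrand u v) := by
  unfold drIntegrand; fun_prop

lemma measurable_d2rIntegrand [MeasurableSpace H] [BorelSpace H] (u v w : H) :
    Measurable (d2rIntegrand u v w) := by
  unfold d2rIntegrand; fun_prop

lemma drIntegrand_add (u v v' ξ : H) :
    drIntegrand u (v + v') ξ = drIntegrand u v ξ + drIntegrand u v' ξ := by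
  simp only [drIntegrand, inner_add_right]; ring

lemma drIntegrand_smul (u : H) (c : ℝ) (v ξ : H) :
    drIntegrand u (c • v) ξ = c * drIntegrand u v ξ := by
  simp only [drIntegrand, real_inner_smul_right]; ring

lemma drIntegrand_add_trunc (u v ξ : H) :
    drIntegrand u v ξ + ⟪trunc ξ, v⟫ / ‖ξ‖ ^ 2 = ⟪ξ, v⟫ * Real.exp (-⟪ξ, u⟫) / ‖ξ‖ ^ 2 := by
  unfold drIntegrand; ring

lemma abs_drIntegrand_le {u ξ : H} (hu : 0 ≤ ⟪ξ, u⟫) (v : H) :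
    |drIntegrand u v ξ| ≤ (1 + ‖u‖) * ‖v‖ := by
  unfold drIntegrand trunc
  split_ifs with hξ
  · -- `|e^{-a} - 1| ≤ a ≤ ‖ξ‖ ‖u‖` absorbs the singularity of `‖ξ‖⁻²` near `0`
    have hexp : |Real.exp (-⟪ξ, u⟫) - 1| ≤ ‖u‖ * ‖ξ‖ := by
      have := Real.abs_exp_neg_sub_exp_neg_le hu le_rfl
      rw [neg_zero, Real.exp_zero, sub_zero, abs_of_nonneg hu] at this
      exact this.trans ((real_inner_le_norm ξ u).trans_eq (mul_comm _ _))
    rw [← mul_sub_one]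
    refine (abs_inner_mul_div_norm_sq_le v (norm_nonneg u) hexp).trans ?_
    nlinarith [norm_nonneg v]
  · have hexp : |Real.exp (-⟪ξ, u⟫)| ≤ 1 * ‖ξ‖ := by
      rw [abs_of_pos (Real.exp_pos _), one_mul]
      exact (Real.exp_le_one_iff.2 (neg_nonpos.2 hu)).trans (lt_of_not_ge hξ).le
    rw [inner_zero_left, sub_zero]
    refine (abs_inner_mul_div_norm_sq_le v zero_le_one hexp).trans ?_
    nlinarith [norm_nonneg v, norm_nonneg u]

lemma abs_drIntegrand_sub_le {u₀ u₁ ξ : H} (h₀ : 0 ≤ ⟪ξ, u₀⟫) (h₁ : 0 ≤ ⟪ξ, u₁⟫) (v : H) :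
    |drIntegrand u₀ v ξ - drIntegrand u₁ v ξ| ≤ ‖u₀ - u₁‖ * ‖v‖ := by
  have hexp : |Real.exp (-⟪ξ, u₀⟫) - Real.exp (-⟪ξ, u₁⟫)| ≤ ‖u₀ - u₁‖ * ‖ξ‖ := by
    refine (Real.abs_exp_neg_sub_exp_neg_le h₀ h₁).trans ?_
    rw [← inner_sub_right, mul_comm]
    exact abs_real_inner_le_norm ξ _
  have hsub : drIntegrand u₀ v ξ - drIntegrand u₁ v ξ
      = ⟪ξ, v⟫ * (Real.exp (-⟪ξ, u₀⟫) - Real.exp (-⟪ξ, u₁⟫)) / ‖ξ‖ ^ 2 := by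
    unfold drIntegrand; ring
  rw [hsub, mul_comm ‖u₀ - u₁‖]
  exact abs_inner_mul_div_norm_sq_le v (norm_nonneg _) hexp

lemma abs_d2rIntegrand_le {u ξ : H} (hu : 0 ≤ ⟪ξ, u⟫) (v w : H) :
    |d2rIntegrand u v w ξ| ≤ ‖v‖ * ‖w‖ := by
  have hexp : |⟪ξ, w⟫ * Real.exp (-⟪ξ, u⟫)| ≤ ‖w‖ * ‖ξ‖ := by
    rw [abs_mul, abs_of_pos (Real.exp_pos _), mul_comm ‖w‖]
    exact mul_le_of_le_one_right (abs_nonneg _) (Real.exp_le_one_iff.2 (neg_nonpos.2 hu)) |>.trans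
      (abs_real_inner_le_norm ξ w)
  have := abs_inner_mul_div_norm_sq_le v (norm_nonneg _) hexp
  rwa [← mul_assoc] at this

lemma abs_d2rIntegrand_sub_le (u u' v w ξ : H) :
    |d2rIntegrand u v w ξ - d2rIntegrand u' v w ξ|
      ≤ ‖v‖ * ‖w‖ * |Real.exp (-⟪ξ, u⟫) - Real.exp (-⟪ξ, u'⟫)| := by
  have hexp : |⟪ξ, w⟫ * (Real.exp (-⟪ξ, u⟫) - Real.exp (-⟪ξ, u'⟫))|
      ≤ ‖w‖ * |Real.exp (-⟪ξ, u⟫) - Real.exp (-⟪ξ, u'⟫)| * ‖ξ‖ := by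
    rw [abs_mul, mul_right_comm, mul_comm ‖w‖]
    exact mul_le_mul_of_nonneg_right (abs_real_inner_le_norm ξ w) (abs_nonneg _)
  have hsub : d2rIntegrand u v w ξ - d2rIntegrand u' v w ξ
      = ⟪ξ, v⟫ * (⟪ξ, w⟫ * (Real.exp (-⟪ξ, u⟫) - Real.exp (-⟪ξ, u'⟫))) / ‖ξ‖ ^ 2 := by
    unfold d2rIntegrand; ring
  rw [hsub, mul_assoc ‖v‖]
  exact abs_inner_mul_div_norm_sq_le v (by positivity) hexp

end Integrands

namespace AdmissibleParams

variable {H : Type*} [NormedAddCommGroup H] [InnerProductSpace ℝ H] [CompleteSpace H]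
  [MeasurableSpace H] [BorelSpace H] {K : Set H} (p : AdmissibleParams H K)

lemma integrableOn_of_abs_le (hK : IsSelfDualCone K) {x : H} (hx : x ∈ K) {f : H → ℝ}
    (hf : Measurable f) {C : ℝ} (hfC : ∀ ξ ∈ K \ {0}, |f ξ| ≤ C) :
    IntegrableOn f (K \ {0}) (p.ν x) :=
  haveI := p.ν_finite x hx
  Measure.integrableOn_of_bounded (measure_ne_top _ _) hf.aestronglyMeasurable
    (ae_restrict_of_forall_mem hK.measurableSet_diff_zero hfC)

lemma integrableOn_drIntegrand (hK : IsSelfDualCone K) {u : H} (hu : u ∈ K) (v : H) {x : H}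
    (hx : x ∈ K) : IntegrableOn (drIntegrand u v) (K \ {0}) (p.ν x) :=
  p.integrableOn_of_abs_le hK hx (measurable_drIntegrand u v) fun _ hξ =>
    abs_drIntegrand_le (hK.inner_nonneg hξ.1 hu) v

lemma integrableOn_d2rIntegrand (hK : IsSelfDualCone K) {u : H} (hu : u ∈ K) (v w : H)
    {x : H} (hx : x ∈ K) : IntegrableOn (d2rIntegrand u v w) (K \ {0}) (p.ν x) :=
  p.integrableOn_of_abs_le hK hx (measurable_d2rIntegrand u v w) fun _ hξ =>
    abs_d2rIntegrand_le (hK.inner_nonneg hξ.1 hu) v w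

lemma norm_le_of_abs_inner_le_add (hK : IsSelfDualCone K) {S T : Set H} (hS : MeasurableSet S)
    (hT : MeasurableSet T) {z : H} {C D : ℝ} (hC : 0 ≤ C) (hD : 0 ≤ D)
    (h : ∀ x ∈ K, |⟪z, x⟫| ≤ C * (p.ν x).real S + D * (p.ν x).real T) :
    ‖z‖ ≤ C * ‖p.muVec S‖ + D * ‖p.muVec T‖ := by
  refine (hK.norm_le_of_abs_inner_le (a := C • p.muVec S + D • p.muVec T) fun x hx => ?_).trans
    ((norm_add_le _ _).trans_eq ?_)
  · rw [inner_add_left, real_inner_smul_left, real_inner_smul_left, p.muVec_spec S hS x hx,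
      p.muVec_spec T hT x hx]
    exact h x hx
  · rw [norm_smul, norm_smul, Real.norm_of_nonneg hC, Real.norm_of_nonneg hD]

lemma norm_le_of_inner_eq_integral (hK : IsSelfDualCone K) {z : H} {f : H → ℝ} {C : ℝ}
    (hC : 0 ≤ C) (hz : ∀ x ∈ K, ⟪z, x⟫ = ∫ ξ in K \ {0}, f ξ ∂p.ν x)
    (hf : ∀ ξ ∈ K \ {0}, |f ξ| ≤ C) : ‖z‖ ≤ C * ‖p.muVec (K \ {0})‖ := by
  have hN := hK.measurableSet_diff_zero
  simpa using p.norm_le_of_abs_inner_le_add hK hN hN hC le_rfl fun x hx => by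
    have := p.ν_finite x hx
    rw [hz x hx, ← Real.norm_eq_abs, zero_mul, add_zero]
    exact norm_setIntegral_le_of_norm_le_const (measure_lt_top _ _) hf

/-- Since `μ(T) - μ(S) ∈ K`, `‖μ(S)‖² ≤ ⟪μ(T), μ(S)⟫ = ν_{μ(T)}(S)`. -/
lemma norm_muVec_sq_le (hK : IsSelfDualCone K) {S T : Set H} (hS : MeasurableSet S)
    (hT : MeasurableSet T) (hST : S ⊆ T) :
    ‖p.muVec S‖ ^ 2 ≤ (p.ν (p.muVec T)).real S := by
  have hdiff : p.muVec T - p.muVec S ∈ K := hK.mem_iff.2 fun y hy => by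
    have := p.ν_finite y hy
    rw [inner_sub_left, p.muVec_spec T hT y hy, p.muVec_spec S hS y hy, sub_nonneg]
    exact measureReal_mono hST
  have := hK.inner_nonneg hdiff (p.muVec_mem S hS)
  rwa [inner_sub_left, sub_nonneg, real_inner_self_eq_norm_sq, real_inner_comm,
    p.muVec_spec S hS _ (p.muVec_mem T hT)] at this

lemma tendsto_norm_muVec_inter_norm_gt (hK : IsSelfDualCone K) :
    Tendsto (fun n : ℕ => ‖p.muVec (K \ {0} ∩ {ξ | (n : ℝ) < ‖ξ‖})‖) atTop (𝓝 0) := by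
  have hN := hK.measurableSet_diff_zero
  set a := p.muVec (K \ {0})
  have := p.ν_finite a (p.muVec_mem _ hN)
  have hmeas (n : ℕ) : MeasurableSet (K \ {0} ∩ {ξ : H | (n : ℝ) < ‖ξ‖}) :=
    hN.inter (measurableSet_lt measurable_const measurable_norm)
  have hanti : Antitone fun n : ℕ => K \ {0} ∩ {ξ : H | (n : ℝ) < ‖ξ‖} := fun n m hnm =>
    Set.inter_subset_inter_right _ fun ξ (hξ : (m : ℝ) < ‖ξ‖) =>
      (Nat.cast_le.2 hnm).trans_lt hξ
  have hempty : ⋂ n : ℕ, K \ {0} ∩ {ξ : H | (n : ℝ) < ‖ξ‖} = ∅ :=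
    Set.iInter_eq_empty_iff.2 fun ξ => (exists_nat_ge ‖ξ‖).imp fun _ hn hξ => hn.not_gt hξ.2
  have hν := tendsto_measure_iInter_atTop (μ := p.ν a) (fun n => (hmeas n).nullMeasurableSet)
    hanti ⟨0, measure_ne_top _ _⟩
  rw [hempty, measure_empty] at hν
  have hsqrt := ((ENNReal.tendsto_toReal ENNReal.zero_ne_top).comp hν).sqrt
  rw [ENNReal.toReal_zero, Real.sqrt_zero] at hsqrt
  exact squeeze_zero (fun _ => norm_nonneg _) (fun n => Real.le_sqrt_of_sq_le
    (p.norm_muVec_sq_le hK (hmeas n) hN Set.inter_subset_left)) hsqrt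

variable {p}

variable (p) in
def IsDR (DR : H → H → H) : Prop :=
  ∀ u ∈ K, ∀ v : H, ∀ x ∈ K, ⟪DR u v, x⟫ =
    ⟪ContinuousLinearMap.adjoint p.B v, x⟫ + ∫ ξ in K \ {0}, drIntegrand u v ξ ∂p.ν x

variable (p) in
def IsD2R (D2R : H → H → H → H) : Prop :=
  ∀ u ∈ K, ∀ v w : H, ∀ x ∈ K, ⟪D2R u v w, x⟫ = -∫ ξ in K \ {0}, d2rIntegrand u v w ξ ∂p.ν x

namespace IsDR

variable {DR : H → H → H} (hK : IsSelfDualCone K) (hDR : p.IsDR DR) {u : H} (hu : u ∈ K)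
include hK hDR hu

lemma map_add (v v' : H) : DR u (v + v') = DR u v + DR u v' :=
  hK.eq_of_forall_inner_eq fun x hx => by
    simp only [inner_add_left, hDR u hu _ x hx, _root_.map_add, drIntegrand_add]
    rw [integral_add (p.integrableOn_drIntegrand hK hu v hx)
      (p.integrableOn_drIntegrand hK hu v' hx)]
    ring

lemma map_smul (c : ℝ) (v : H) : DR u (c • v) = c • DR u v :=
  hK.eq_of_forall_inner_eq fun x hx => by
    simp only [real_inner_smul_left, hDR u hu _ x hx, _root_.map_smul, drIntegrand_smul,
      integral_const_mul]
    ring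

lemma norm_sub_adjoint_le (v : H) :
    ‖DR u v - ContinuousLinearMap.adjoint p.B v‖ ≤ (1 + ‖u‖) * ‖v‖ * ‖p.muVec (K \ {0})‖ :=
  p.norm_le_of_inner_eq_integral hK (by positivity)
    (fun x hx => by rw [inner_sub_left, hDR u hu v x hx, add_sub_cancel_left])
    fun _ hξ => abs_drIntegrand_le (hK.inner_nonneg hξ.1 hu) v

lemma norm_le (v : H) :
    ‖DR u v‖ ≤ ‖ContinuousLinearMap.adjoint p.B‖ * ‖v‖
      + ‖p.muVec (K \ {0})‖ * (1 + ‖u‖) * ‖v‖ :=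
  calc ‖DR u v‖ ≤ ‖ContinuousLinearMap.adjoint p.B v‖
        + ‖DR u v - ContinuousLinearMap.adjoint p.B v‖ := norm_le_insert' _ _
    _ ≤ ‖ContinuousLinearMap.adjoint p.B‖ * ‖v‖ + (1 + ‖u‖) * ‖v‖ * ‖p.muVec (K \ {0})‖ :=
        add_le_add ((ContinuousLinearMap.adjoint p.B).le_opNorm v)
          (hDR.norm_sub_adjoint_le hK hu v)
    _ = _ := by ring

lemma exists_continuousLinearMap : ∃ T : H →L[ℝ] H, ∀ v : H, T v = DR u v :=
  ⟨LinearMap.mkContinuous ⟨⟨DR u, hDR.map_add hK hu⟩, hDR.map_smul hK hu⟩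
    (‖ContinuousLinearMap.adjoint p.B‖ + ‖p.muVec (K \ {0})‖ * (1 + ‖u‖))
    fun v => (hDR.norm_le hK hu v).trans_eq (by ring), fun _ => rfl⟩

/-- The compensator `⟪χ(ξ), w⟫ / ‖ξ‖²` is controlled by `B_quasi`,
and what remains, `⟪ξ, w⟫ e^{-⟪ξ, u⟫} / ‖ξ‖²`, is nonnegative on `K`. -/
lemma inner_nonneg {w x : H} (hw : w ∈ K) (hx : x ∈ K) (hwx : ⟪w, x⟫ = 0) :
    0 ≤ ⟪DR u w, x⟫ := by
  have hN := hK.measurableSet_diff_zero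
  have hpos : 0 ≤ ∫ ξ in K \ {0}, (drIntegrand u w ξ + ⟪trunc ξ, w⟫ / ‖ξ‖ ^ 2) ∂p.ν x :=
    setIntegral_nonneg hN fun ξ hξ => by
      rw [drIntegrand_add_trunc]
      have := hK.inner_nonneg hξ.1 hw
      positivity
  rw [integral_add (p.integrableOn_drIntegrand hK hu w hx) (p.ν_int w hw x hx hwx)] at hpos
  rw [hDR u hu w x hx]
  linarith [p.B_quasi w hw x hx hwx]

lemma norm_sub_le {u' : H} (hu' : u' ∈ K) (v : H) :
    ‖DR u v - DR u' v‖ ≤ ‖p.muVec (K \ {0})‖ * ‖u - u'‖ * ‖v‖ := by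
  refine (p.norm_le_of_inner_eq_integral hK (C := ‖u - u'‖ * ‖v‖) (by positivity) (fun x hx => ?_)
    fun ξ hξ => abs_drIntegrand_sub_le (hK.inner_nonneg hξ.1 hu) (hK.inner_nonneg hξ.1 hu') v)
    |>.trans_eq (by ring)
  rw [inner_sub_left, hDR u hu v x hx, hDR u' hu' v x hx, integral_sub
    (p.integrableOn_drIntegrand hK hu v hx) (p.integrableOn_drIntegrand hK hu' v hx)]
  ring

end IsDR

namespace IsD2R

variable {D2R : H → H → H → H} (hK : IsSelfDualCone K) (hD2R : p.IsD2R D2R)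
include hK hD2R

lemma norm_le {u : H} (hu : u ∈ K) (v w : H) :
    ‖D2R u v w‖ ≤ ‖p.muVec (K \ {0})‖ * ‖v‖ * ‖w‖ :=
  (p.norm_le_of_inner_eq_integral hK (C := ‖v‖ * ‖w‖) (by positivity)
    (fun x hx => by rw [hD2R u hu v w x hx, ← integral_neg])
    fun ξ hξ => by
      rw [abs_neg]; exact abs_d2rIntegrand_le (hK.inner_nonneg hξ.1 hu) v w).trans_eq
    (by ring)

lemma norm_sub_le {u u' : H} (hu : u ∈ K) (hu' : u' ∈ K) (v w : H) {R : ℝ} (hR : 0 ≤ R) :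
    ‖D2R u v w - D2R u' v w‖ ≤ ‖v‖ * ‖w‖ * R * ‖p.muVec (K \ {0})‖ * ‖u - u'‖
      + ‖v‖ * ‖w‖ * ‖p.muVec (K \ {0} ∩ {ξ | R < ‖ξ‖})‖ := by
  have hN := hK.measurableSet_diff_zero
  have hT : MeasurableSet {ξ : H | R < ‖ξ‖} := measurableSet_lt measurable_const measurable_norm
  refine (p.norm_le_of_abs_inner_le_add hK hN (hN.inter hT) (C := ‖v‖ * ‖w‖ * R * ‖u - u'‖)
    (D := ‖v‖ * ‖w‖) (by positivity) (by positivity) fun x hx => ?_).trans_eq (by ring)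
  have := p.ν_finite x hx
  rw [inner_sub_left, hD2R u hu v w x hx, hD2R u' hu' v w x hx, neg_sub_neg,
    ← integral_sub (p.integrableOn_d2rIntegrand hK hu' v w hx)
      (p.integrableOn_d2rIntegrand hK hu v w hx), ← Real.norm_eq_abs]
  refine norm_setIntegral_le_of_norm_le_of_norm_le hT
    ((p.integrableOn_d2rIntegrand hK hu' v w hx).sub (p.integrableOn_d2rIntegrand hK hu v w hx))
    (by positivity) (fun ξ hξ => ?_) (fun ξ hξ => ?_)
  all_goals
    have h₀ := hK.inner_nonneg hξ.1.1 hu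
    have h₁ := hK.inner_nonneg hξ.1.1 hu'
    rw [Pi.sub_apply, Real.norm_eq_abs, abs_sub_comm]
    refine (abs_d2rIntegrand_sub_le u u' v w ξ).trans ?_
  · have hexp : |Real.exp (-⟪ξ, u⟫) - Real.exp (-⟪ξ, u'⟫)| ≤ ‖ξ‖ * ‖u - u'‖ :=
      (Real.abs_exp_neg_sub_exp_neg_le h₀ h₁).trans
        (by rw [← inner_sub_right]; exact abs_real_inner_le_norm ξ _)
    have hξR : ‖ξ‖ ≤ R := not_lt.1 hξ.2
    calc ‖v‖ * ‖w‖ * |Real.exp (-⟪ξ, u⟫) - Real.exp (-⟪ξ, u'⟫)|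
        ≤ ‖v‖ * ‖w‖ * (R * ‖u - u'‖) := by gcongr; exact hexp.trans (by gcongr)
      _ = ‖v‖ * ‖w‖ * R * ‖u - u'‖ := by ring
  · exact mul_le_of_le_one_right (by positivity) (Real.abs_exp_neg_sub_exp_neg_le_one h₀ h₁)

lemma continuousOn (v w : H) : ContinuousOn (fun u => D2R u v w) K := fun u₀ hu₀ =>
  continuousWithinAt_of_dist_le_mul_add
    (by simpa using (p.tendsto_norm_muVec_inter_norm_gt hK).const_mul (‖v‖ * ‖w‖))
    fun n u hu => by
      simpa only [dist_eq_norm] using hD2R.norm_sub_le hK hu hu₀ v w (Nat.cast_nonneg n)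

end IsD2R

end AdmissibleParams

theorem stmt_12_general {H : Type*} [NormedAddCommGroup H] [InnerProductSpace ℝ H] [CompleteSpace H]
    [MeasurableSpace H] [BorelSpace H] (K : Set H)
    (hK : IsSelfDualCone K)
    (p : AdmissibleParams H K)
    (DR : H → H → H)
    (hDR : ∀ u ∈ K, ∀ v : H, ∀ x ∈ K, ⟪DR u v, x⟫ =
      ⟪ContinuousLinearMap.adjoint p.B v, x⟫
        + ∫ ξ in K \ {0}, (⟪ξ, v⟫ * Real.exp (-⟪ξ, u⟫) - ⟪trunc ξ, v⟫) / ‖ξ‖ ^ 2 ∂(p.ν x))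
    (D2R : H → H → H → H)
    (hD2R : ∀ u ∈ K, ∀ v w : H, ∀ x ∈ K, ⟪D2R u v w, x⟫ =
      -∫ ξ in K \ {0}, (⟪ξ, v⟫ * ⟪ξ, w⟫ * Real.exp (-⟪ξ, u⟫)) / ‖ξ‖ ^ 2 ∂(p.ν x)) :
    -- (a) `DR(u)` is a bounded linear operator, quasi-monotone with respect to `K`
    (∀ u ∈ K, (∃ T : H →L[ℝ] H, ∀ v : H, T v = DR u v) ∧
      (∀ v₁ v₂ : H, v₂ - v₁ ∈ K → ∀ x ∈ K, ⟪v₂ - v₁, x⟫ = 0 →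
        0 ≤ ⟪DR u v₂ - DR u v₁, x⟫)) ∧
    -- (b) norm bound for `DR(u₀)`
    (∀ u₀ ∈ K, ∀ v : H,
      ‖DR u₀ v‖ ≤ ‖ContinuousLinearMap.adjoint p.B‖ * ‖v‖
        + ‖p.muVec (K \ {0})‖ * (1 + ‖u₀‖) * ‖v‖) ∧
    -- (c) Lipschitz dependence on the base point
    (∀ u₀ ∈ K, ∀ u₁ ∈ K, ∀ v : H,
      ‖DR u₀ v - DR u₁ v‖ ≤ ‖p.muVec (K \ {0})‖ * ‖u₀ - u₁‖ * ‖v‖) ∧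
    -- (d) norm bound for `D²R(u₀)`
    (∀ u₀ ∈ K, ∀ v w : H, ‖D2R u₀ v w‖ ≤ ‖p.muVec (K \ {0})‖ * ‖v‖ * ‖w‖) ∧
    -- (e) continuity of `u ↦ D²R(u)(v,w)` on `K`
    (∀ v w : H, ContinuousOn (fun u => D2R u v w) K) := by
  have hDR : p.IsDR DR := hDR
  have hD2R : p.IsD2R D2R := hD2R
  refine ⟨fun u hu => ⟨hDR.exists_continuousLinearMap hK hu, fun v₁ v₂ hv x hx hvx => ?_⟩,
    fun u hu v => hDR.norm_le hK hu v, fun u hu u' hu' v => hDR.norm_sub_le hK hu hu' v,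
    fun u hu v w => hD2R.norm_le hK hu v w, hD2R.continuousOn hK⟩
  obtain ⟨T, hT⟩ := hDR.exists_continuousLinearMap hK hu
  rw [← hT, ← hT, ← map_sub, hT]
  exact hDR.inner_nonneg hK hu hv hx hvx

/-- Properties of the derivative candidates `DR(u)` and `D²R(u)`:
boundedness, linearity, quasi-monotonicity, norm estimates, Lipschitz dependence on `u`,
and continuity of `u ↦ D²R(u)(v,w)`. -/
theorem stmt_12 {H : Type*} [NormedAddCommGroup H] [InnerProductSpace ℝ H] [CompleteSpace H]
    [MeasurableSpace H] [BorelSpace H] (K : Set H)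
    (hK : IsSelfDualCone K) (hKgen : ∀ z : H, ∃ x ∈ K, ∃ y ∈ K, z = x - y)
    (p : AdmissibleParams H K)
    (DR : H → H → H)
    (hDR : ∀ u ∈ K, ∀ v : H, ∀ x ∈ K, ⟪DR u v, x⟫ =
      ⟪ContinuousLinearMap.adjoint p.B v, x⟫
        + ∫ ξ in K \ {0}, (⟪ξ, v⟫ * Real.exp (-⟪ξ, u⟫) - ⟪trunc ξ, v⟫) / ‖ξ‖ ^ 2 ∂(p.ν x))
    (D2R : H → H → H → H)
    (hD2R : ∀ u ∈ K, ∀ v w : H, ∀ x ∈ K, ⟪D2R u v w, x⟫ =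
      -∫ ξ in K \ {0}, (⟪ξ, v⟫ * ⟪ξ, w⟫ * Real.exp (-⟪ξ, u⟫)) / ‖ξ‖ ^ 2 ∂(p.ν x)) :
    -- (a) `DR(u)` is a bounded linear operator, quasi-monotone with respect to `K`
    (∀ u ∈ K, (∃ T : H →L[ℝ] H, ∀ v : H, T v = DR u v) ∧
      (∀ v₁ v₂ : H, v₂ - v₁ ∈ K → ∀ x ∈ K, ⟪v₂ - v₁, x⟫ = 0 →
        0 ≤ ⟪DR u v₂ - DR u v₁, x⟫)) ∧
    -- (b) norm bound for `DR(u₀)`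
    (∀ u₀ ∈ K, ∀ v : H,
      ‖DR u₀ v‖ ≤ ‖ContinuousLinearMap.adjoint p.B‖ * ‖v‖
        + ‖p.muVec (K \ {0})‖ * (1 + ‖u₀‖) * ‖v‖) ∧
    -- (c) Lipschitz dependence on the base point
    (∀ u₀ ∈ K, ∀ u₁ ∈ K, ∀ v : H,
      ‖DR u₀ v - DR u₁ v‖ ≤ ‖p.muVec (K \ {0})‖ * ‖u₀ - u₁‖ * ‖v‖) ∧
    -- (d) norm bound for `D²R(u₀)`
    (∀ u₀ ∈ K, ∀ v w : H, ‖D2R u₀ v w‖ ≤ ‖p.muVec (K \ {0})‖ * ‖v‖ * ‖w‖) ∧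
    -- (e) continuity of `u ↦ D²R(u)(v,w)` on `K`
    (∀ v w : H, ContinuousOn (fun u => D2R u v w) K) :=
  stmt_12_general K hK p DR hDR D2R hD2R
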